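/- Let Σ̂ be symmetric positive definite and S symmetric positive semidefinite d×d matrices, let μ̂, μ ∈ ℝ^d. With G = Σ̂^{-1/2}(Σ̂^{1/2} S² Σ̂^{1/2})^{1/2} Σ̂^{-1/2} and g = μ - G μ̂, the affine map Δ(a) = G a + g pushes the Gaussian distribution N(μ̂, Σ̂) forward to the Gaussian distribution N(μ, S²). -/

import Mathlib

/-!
Gaussians are closed under affine maps: `x ↦ G x + g` sends `N(m, C)` to `N(G m + g, G C Gᵀ)`,
as one sees on each linear marginal `θᵀx`. Here `G μ̂ + g = μ`, and `G` is symmetric with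
`G Σ̂ G = S²`: writing `A = Σ̂^{1/2}` and `B = (A S² A)^{1/2}`, we have
`G Σ̂ G = A⁻¹ B (A⁻¹ A A A⁻¹) B A⁻¹ = A⁻¹ B² A⁻¹ = S²`.
-/

open ProbabilityTheory MeasureTheory Matrix

/-- The standard logistic (sigmoid) function. -/
noncomputable def sigmoid (t : ℝ) : ℝ := 1 / (1 + Real.exp (-t))

/-- CDF of the standard one-dimensional Gaussian. -/
noncomputable def stdNormalCDF (x : ℝ) : ℝ := (gaussianReal 0 1 (Set.Iic x)).toReal

/-- Quantile function of the standard one-dimensional Gaussian. -/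
noncomputable def stdNormalQuantile (p : ℝ) : ℝ := sInf {x : ℝ | p ≤ stdNormalCDF x}

/-- `P` is the multivariate Gaussian `N(m, C)`: every one-dimensional linear marginal
`θᵀX` is the real Gaussian with mean `θᵀm` and variance `θᵀCθ`. -/
def IsMultiGaussian {d : ℕ} (P : Measure (Fin d → ℝ)) (m : Fin d → ℝ)
    (C : Matrix (Fin d) (Fin d) ℝ) : Prop :=
  ∀ θ : Fin d → ℝ,
    P.map (fun x => θ ⬝ᵥ x) = gaussianReal (θ ⬝ᵥ m) (Real.toNNReal (θ ⬝ᵥ C.mulVec θ))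

/-- Euclidean (ℓ²) norm of a vector in ℝ^d. -/
noncomputable def euclNorm {d : ℕ} (v : Fin d → ℝ) : ℝ := Real.sqrt (v ⬝ᵥ v)

/-- Frobenius norm of a d×d real matrix. -/
noncomputable def frobNorm {d : ℕ} (A : Matrix (Fin d) (Fin d) ℝ) : ℝ :=
  Real.sqrt (∑ i, ∑ j, (A i j) ^ 2)

lemma aux_psd {d : ℕ} {A M : Matrix (Fin d) (Fin d) ℝ} (hA : A.IsHermitian)
    (hM : M.PosSemidef) : (A * M * A).PosSemidef := by
  have h := hM.mul_mul_conjTranspose_same A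
  rwa [hA.eq] at h

/-- The square root of a positive semidefinite matrix, as defined in the older Mathlib
(`Matrix.PosSemidef.sqrt`, since removed). -/
noncomputable def Matrix.PosSemidef.sqrt {n : Type*} [Fintype n] [DecidableEq n]
    {A : Matrix n n ℝ} (hA : A.PosSemidef) : Matrix n n ℝ :=
  hA.1.eigenvectorUnitary.1 * diagonal ((√·) ∘ hA.1.eigenvalues) *
    (star hA.1.eigenvectorUnitary : Matrix n n ℝ)

lemma Matrix.PosSemidef.posSemidef_sqrt {n : Type*} [Fintype n] [DecidableEq n]
    {A : Matrix n n ℝ} (hA : A.PosSemidef) : hA.sqrt.PosSemidef := by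
  have hD : (diagonal ((√·) ∘ hA.1.eigenvalues) : Matrix n n ℝ).PosSemidef := by
    apply PosSemidef.diagonal
    intro i
    simp [Function.comp, Real.sqrt_nonneg]
  have h := hD.mul_mul_conjTranspose_same (hA.1.eigenvectorUnitary : Matrix n n ℝ)
  unfold Matrix.PosSemidef.sqrt
  simpa [Matrix.star_eq_conjTranspose] using h

lemma Matrix.PosSemidef.sqrt_mul_self {n : Type*} [Fintype n] [DecidableEq n]
    {A : Matrix n n ℝ} (hA : A.PosSemidef) : hA.sqrt * hA.sqrt = A := by
  set U : Matrix n n ℝ := (hA.1.eigenvectorUnitary : Matrix n n ℝ)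
  set D : Matrix n n ℝ := diagonal ((√·) ∘ hA.1.eigenvalues)
  have hUU : star U * U = 1 := Unitary.coe_star_mul_self _
  have hDD : D * D = diagonal (RCLike.ofReal ∘ hA.1.eigenvalues) := by
    rw [diagonal_mul_diagonal]
    congr 1
    funext i
    simp [Real.mul_self_sqrt (hA.eigenvalues_nonneg i)]
  calc U * D * star U * (U * D * star U) = U * D * (star U * U) * D * star U := by
        simp only [mul_assoc]
    _ = A := by
        rw [hUU, mul_one, mul_assoc U, hDD]
        exact hA.1.spectral_theorem.symm

lemma Matrix.isUnit_of_mul_self_posDef {n : Type*} [Fintype n] [DecidableEq n]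
    {A C : Matrix n n ℝ} (hC : C.PosDef) (hA : A * A = C) : IsUnit A :=
  isUnit_of_mul_isUnit_left (hA ▸ hC.isUnit)

lemma Matrix.inv_mul_mul_inv_conj_eq {n R : Type*} [Fintype n] [DecidableEq n] [CommRing R]
    {A B C M : Matrix n n R} (hA : IsUnit A) (hAA : A * A = C) (hB : B * B = A * M * A) :
    A⁻¹ * B * A⁻¹ * C * (A⁻¹ * B * A⁻¹) = M := by
  have hAinv : A⁻¹ * A = 1 := A.nonsing_inv_mul ((A.isUnit_iff_isUnit_det).mp hA)
  have hAinv' : A * A⁻¹ = 1 := A.mul_nonsing_inv ((A.isUnit_iff_isUnit_det).mp hA)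
  calc A⁻¹ * B * A⁻¹ * C * (A⁻¹ * B * A⁻¹)
      = A⁻¹ * (B * ((A⁻¹ * A) * (A * A⁻¹)) * B) * A⁻¹ := by rw [← hAA]; noncomm_ring
    _ = A⁻¹ * (A * M * A) * A⁻¹ := by rw [hAinv, hAinv', one_mul, mul_one, hB]
    _ = (A⁻¹ * A) * M * (A * A⁻¹) := by noncomm_ring
    _ = M := by rw [hAinv, hAinv', one_mul, mul_one]

lemma IsMultiGaussian.map_affine {d : ℕ} {P : Measure (Fin d → ℝ)} {m : Fin d → ℝ}
    {C : Matrix (Fin d) (Fin d) ℝ} (hP : IsMultiGaussian P m C)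
    (G : Matrix (Fin d) (Fin d) ℝ) (b : Fin d → ℝ) :
    IsMultiGaussian (P.map fun x => G *ᵥ x + b) (G *ᵥ m + b) (G * C * Gᵀ) := by
  intro θ
  have hdot (v : Fin d → ℝ) : Measurable fun x : Fin d → ℝ => v ⬝ᵥ x :=
    (continuous_const.dotProduct continuous_id).measurable
  have haffine : Measurable fun x => G *ᵥ x + b :=
    ((continuous_const.matrix_mulVec continuous_id).add continuous_const).measurable
  have hmarginal : (fun x => θ ⬝ᵥ x) ∘ (fun x => G *ᵥ x + b)
      = (· + θ ⬝ᵥ b) ∘ (fun x => (θ ᵥ* G) ⬝ᵥ x) := by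
    funext x
    simp only [Function.comp_apply, dotProduct_add, dotProduct_mulVec]
  rw [Measure.map_map (hdot θ) haffine, hmarginal,
    ← Measure.map_map (measurable_add_const _) (hdot _), hP,
    gaussianReal_map_add_const, dotProduct_add, ← mulVec_mulVec, mulVec_transpose,
    ← mulVec_mulVec, dotProduct_mulVec θ G, dotProduct_mulVec θ G]

theorem stmt4_general {d : ℕ} {Sig S : Matrix (Fin d) (Fin d) ℝ}
    (hSig : Sig.PosDef) (hS : S.PosSemidef) (μh μ : Fin d → ℝ)
    (P : Measure (Fin d → ℝ))
    (hP : IsMultiGaussian P μh Sig) :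
    ∀ G : Matrix (Fin d) (Fin d) ℝ,
      G = hSig.posSemidef.sqrt⁻¹ *
            (aux_psd hSig.posSemidef.posSemidef_sqrt.1 (hS.pow 2)).sqrt *
            hSig.posSemidef.sqrt⁻¹ →
      IsMultiGaussian (P.map (fun a => G.mulVec a + (μ - G.mulVec μh))) μ (S ^ 2) := by
  intro G hG
  have hA := hSig.posSemidef.posSemidef_sqrt
  have hGherm : G.IsHermitian := by
    simpa only [hG, hA.1.inv.eq] using isHermitian_conjTranspose_mul_mul hSig.posSemidef.sqrt⁻¹
      (aux_psd hA.1 (hS.pow 2)).posSemidef_sqrt.1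
  have hGsymm : Gᵀ = G := by
    rw [← conjTranspose_eq_transpose_of_trivial]
    exact hGherm.eq
  have hcov : G * Sig * Gᵀ = S ^ 2 := by
    rw [hGsymm, hG]
    exact inv_mul_mul_inv_conj_eq
      (isUnit_of_mul_self_posDef hSig hSig.posSemidef.sqrt_mul_self)
      hSig.posSemidef.sqrt_mul_self (aux_psd hA.1 (hS.pow 2)).sqrt_mul_self
  simpa only [add_sub_cancel, hcov] using hP.map_affine G (μ - G *ᵥ μh)

theorem stmt4 {d : ℕ} {Sig S : Matrix (Fin d) (Fin d) ℝ}
    (hSig : Sig.PosDef) (hS : S.PosSemidef) (μh μ : Fin d → ℝ)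
    (P : Measure (Fin d → ℝ)) [IsProbabilityMeasure P]
    (hP : IsMultiGaussian P μh Sig) :
    ∀ G : Matrix (Fin d) (Fin d) ℝ,
      G = hSig.posSemidef.sqrt⁻¹ *
            (aux_psd hSig.posSemidef.posSemidef_sqrt.1 (hS.pow 2)).sqrt *
            hSig.posSemidef.sqrt⁻¹ →
      IsMultiGaussian (P.map (fun a => G.mulVec a + (μ - G.mulVec μh))) μ (S ^ 2) :=
  stmt4_general hSig hS μh μ P hP
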